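/- Let k ≥ 3 be prime and let (G,γ) be a ℤ/kℤ-colored graph with n vertices and m edges. Then (G,γ) is cone-Laman if and only if its lift G̃ is Laman-sparse and has ñ = kn vertices and 2ñ − k edges (equivalently, m = 2n − 1 and every subgraph of G̃ with at least one edge, on n' vertices with m' edges, satisfies m' ≤ 2n' − 3). -/

import Mathlib

open Matrix

noncomputable section

/-- A `Γ`-colored directed multigraph: vertex set `Fin n`, edge set `Fin m`,
each edge `e` directed from `tail e` to `head e` with color `color e`. -/
structure CGraph (Γ : Type) where
  n : ℕ
  m : ℕ
  tail : Fin m → Fin n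
  head : Fin m → Fin n
  color : Fin m → Γ

namespace CGraph

variable {Γ : Type} [AddCommGroup Γ]

/-- The vertices spanned by a subset `S` of edges (the subgraph determined by `S`). -/
def verts (G : CGraph Γ) (S : Finset (Fin G.m)) : Finset (Fin G.n) :=
  S.image G.tail ∪ S.image G.head

/-- One step of a walk in the subgraph `S`, recorded together with the running gain:
an edge may be traversed forwards (adding its color) or backwards (subtracting it). -/
def liftStep (G : CGraph Γ) (S : Finset (Fin G.m)) (x y : Fin G.n × Γ) : Prop :=
  ∃ e ∈ S,
    (G.tail e = x.1 ∧ G.head e = y.1 ∧ y.2 = x.2 + G.color e) ∨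
    (G.head e = x.1 ∧ G.tail e = y.1 ∧ y.2 = x.2 - G.color e)

/-- The ρ-image of the component of `v` in the subgraph `S`: the subgroup of `Γ`
formed by the gains of closed walks in `S` based at `v`. -/
def gainGroup (G : CGraph Γ) (S : Finset (Fin G.m)) (v : Fin G.n) : AddSubgroup Γ :=
  AddSubgroup.closure {g : Γ | Relation.ReflTransGen (G.liftStep S) (v, 0) (v, g)}

/-- Adjacency (through an edge of `S`) on the vertices of the subgraph `S`. -/
def adj (G : CGraph Γ) (S : Finset (Fin G.m))
    (x y : {v : Fin G.n // v ∈ G.verts S}) : Prop :=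
  ∃ e ∈ S, (G.tail e = x.1 ∧ G.head e = y.1) ∨ (G.tail e = y.1 ∧ G.head e = x.1)

/-- The connected components of the subgraph `S`. -/
def comps (G : CGraph Γ) (S : Finset (Fin G.m)) : Type :=
  Quot (G.adj S)

/-- The component `x` of the subgraph `S` has trivial ρ-image. -/
def TrivComp (G : CGraph Γ) (S : Finset (Fin G.m)) (x : G.comps S) : Prop :=
  ∃ v, Quot.mk (G.adj S) v = x ∧ G.gainGroup S v.1 = ⊥

/-- The number of connected components of `S` with trivial ρ-image. -/
def c0 (G : CGraph Γ) (S : Finset (Fin G.m)) : ℕ :=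
  Nat.card {x : G.comps S // G.TrivComp S x}

/-- The number of connected components of `S` with nontrivial ρ-image. -/
def c1 (G : CGraph Γ) (S : Finset (Fin G.m)) : ℕ :=
  Nat.card {x : G.comps S // ¬ G.TrivComp S x}

/-- The total number of connected components of the subgraph `S`. -/
def numComps (G : CGraph Γ) (S : Finset (Fin G.m)) : ℕ :=
  Nat.card (G.comps S)

/-- `Λ(S)`: the subgroup of `Γ` generated by the ρ-images of all components of `S`. -/
def Lambda (G : CGraph Γ) (S : Finset (Fin G.m)) : AddSubgroup Γ :=
  ⨆ v ∈ G.verts S, G.gainGroup S v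

end CGraph

namespace CGraph

/-- Cone-Laman: `m = 2n - 1` edges and every subgraph satisfies
`m' ≤ 2n' - 3c'₀ - c'₁`. -/
def ConeLaman {k : ℕ} (G : CGraph (ZMod k)) : Prop :=
  (G.m : ℤ) = 2 * (G.n : ℤ) - 1 ∧
  ∀ S : Finset (Fin G.m), S.Nonempty →
    (S.card : ℤ) ≤ 2 * (G.verts S).card - 3 * (G.c0 S : ℤ) - (G.c1 S : ℤ)

end CGraph

namespace CGraph

/-- The vertices of the lift `G̃` spanned by a set `S` of lifted edges: the lifted
edge `(e, t)` joins `(tail e, t)` to `(head e, t + γ_e)`. -/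
def liftVerts {k : ℕ} (G : CGraph (ZMod k)) (S : Finset (Fin G.m × ZMod k)) :
    Finset (Fin G.n × ZMod k) :=
  S.image (fun x => (G.tail x.1, x.2)) ∪
    S.image (fun x => (G.head x.1, x.2 + G.color x.1))

/-- The lift `G̃` of `(G,γ)` is Laman-sparse: every nonempty set `S` of lifted edges
satisfies `|S| ≤ 2·|V(S)| - 3`. -/
def LiftLamanSparse {k : ℕ} (G : CGraph (ZMod k)) : Prop :=
  ∀ S : Finset (Fin G.m × ZMod k), S.Nonempty →
    (S.card : ℤ) ≤ 2 * (G.liftVerts S).card - 3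

end CGraph

/-!
A component of a subgraph `S` with trivial ρ-image lifts isomorphically to one sheet of `G̃`
(follow a potential), and the full preimage of any component has `k` times as many edges and
vertices; Laman-sparsity of `G̃` thus bounds each component by `2n' - 3`, resp. `2n' - 1`,
and these bounds add up to the cone-Laman count.

Conversely, slice a set `C` of lifted edges into the levels `Hⱼ` (the edges with at least `j`
lifts in `C`, `1 ≤ j ≤ k`). Then `|C| = ∑ |Hⱼ|` and `∑ |V(Hⱼ)| ≤ |V(C)|`, and every nonempty
level falls short of `2|V(Hⱼ)|` by at least `1`. The missing `3` comes from the top level `d`: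
if `d ≥ 3` there are three nonempty levels; otherwise either a vertex of `H_d` has more than `d`
lifts, so that `∑ |V(Hⱼ)| < |V(C)|`, or the sum of the `d` sheets above each vertex is a
potential for `d • γ` on `H_d`, so `H_d` is balanced (`d ∈ {1, 2}` is a unit mod `k`) and falls
short by `3`.
-/

theorem Finset.card_eq_sum_card_slice {α β : Type*} [Fintype α] [Fintype β] [DecidableEq α]
    [DecidableEq β] (s : Finset (α × β)) :
    s.card = ∑ a, (Finset.univ.filter fun b => (a, b) ∈ s).card := by
  simp only [Finset.card_filter]
  rw [← Fintype.sum_prod_type' (fun a b => if (a, b) ∈ s then 1 else 0), ← Finset.card_filter]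
  simp

theorem Finset.sum_eq_sum_Icc_card_filter_le {α : Type*} [Fintype α] {f : α → ℕ} {n : ℕ}
    (hf : ∀ a, f a ≤ n) :
    ∑ a, f a = ∑ j ∈ Finset.Icc 1 n, (Finset.univ.filter fun a => j ≤ f a).card := by
  simp only [Finset.card_filter]
  rw [Finset.sum_comm]
  refine Finset.sum_congr rfl fun a _ => ?_
  have : {j ∈ Finset.Icc 1 n | j ≤ f a} = Finset.Icc 1 (f a) := by
    ext j
    simp only [Finset.mem_filter, Finset.mem_Icc]
    have := hf a
    omega
  simp [this]

theorem Finset.sum_card_eq_sum_card_filter_mem {α ι : Type*} [Fintype α] [DecidableEq α]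
    (J : Finset ι) (V : ι → Finset α) :
    ∑ j ∈ J, (V j).card = ∑ a, (J.filter fun j => a ∈ V j).card := by
  simp only [Finset.card_filter]
  rw [Finset.sum_comm]
  simp

namespace CGraph

section GainGraph

variable {Γ : Type} {G : CGraph Γ} {S T : Finset (Fin G.m)}

theorem mem_verts {w : Fin G.n} : w ∈ G.verts S ↔ ∃ e ∈ S, G.tail e = w ∨ G.head e = w := by
  simp only [verts, Finset.mem_union, Finset.mem_image]
  aesop

theorem tail_mem_verts {e : Fin G.m} (he : e ∈ S) : G.tail e ∈ G.verts S :=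
  mem_verts.2 ⟨e, he, .inl rfl⟩

theorem head_mem_verts {e : Fin G.m} (he : e ∈ S) : G.head e ∈ G.verts S :=
  mem_verts.2 ⟨e, he, .inr rfl⟩

theorem verts_mono (h : S ⊆ T) : G.verts S ⊆ G.verts T :=
  Finset.union_subset_union (Finset.image_subset_image h) (Finset.image_subset_image h)

instance : Finite (G.comps S) :=
  Finite.of_surjective _ Quot.mk_surjective

instance : IsEmpty (G.comps ∅) :=
  ⟨fun x => (Quot.exists_rep x).elim fun v _ => by simpa [verts] using v.2⟩

theorem nonempty_comps (hS : S.Nonempty) : Nonempty (G.comps S) :=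
  let ⟨_, he⟩ := hS
  ⟨Quot.mk _ ⟨_, tail_mem_verts he⟩⟩

variable [AddCommGroup Γ]

variable (G) in
def penalty (S : Finset (Fin G.m)) : ℕ :=
  3 * G.c0 S + G.c1 S

variable (G) in
def ConeLamanSparse : Prop :=
  ∀ S : Finset (Fin G.m), S.Nonempty →
    (S.card : ℤ) ≤ 2 * (G.verts S).card - 3 * (G.c0 S : ℤ) - (G.c1 S : ℤ)

theorem ConeLamanSparse.card_add_penalty_le (h : G.ConeLamanSparse) (S : Finset (Fin G.m)) :
    S.card + G.penalty S ≤ 2 * (G.verts S).card := by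
  rcases S.eq_empty_or_nonempty with rfl | hS
  · simp [penalty, c0, c1, verts]
  · have := h S hS
    rw [penalty]
    omega

theorem one_le_penalty (hS : S.Nonempty) : 1 ≤ G.penalty S := by
  obtain ⟨x⟩ := nonempty_comps hS
  by_cases hx : G.TrivComp S x
  · have : Nonempty {y // G.TrivComp S y} := ⟨⟨x, hx⟩⟩
    have : 1 ≤ G.c0 S := Nat.card_pos
    rw [penalty]
    omega
  · have : Nonempty {y // ¬ G.TrivComp S y} := ⟨⟨x, hx⟩⟩
    exact Nat.le_add_left_of_le Nat.card_pos

theorem three_le_penalty (hS : S.Nonempty) (h : ∀ v, G.gainGroup S v = ⊥) :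
    3 ≤ G.penalty S := by
  obtain ⟨x⟩ := nonempty_comps hS
  have : Nonempty {y // G.TrivComp S y} := ⟨⟨x, x.ind fun v => ⟨v, rfl, h v.1⟩⟩⟩
  have : 1 ≤ G.c0 S := Nat.card_pos
  rw [penalty]
  omega

open scoped Classical in
theorem sum_ite_trivComp [Fintype (G.comps S)] :
    ∑ x, (if G.TrivComp S x then 3 else 1) = G.penalty S := by
  rw [Finset.sum_ite, Finset.sum_const, Finset.sum_const, penalty, c0, c1,
    Nat.card_eq_fintype_card, Fintype.card_subtype, Nat.card_eq_fintype_card,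
    Fintype.card_subtype]
  simp [mul_comm]

theorem liftStep_symm {x y : Fin G.n × Γ} (h : G.liftStep S x y) : G.liftStep S y x := by
  obtain ⟨e, he, ⟨h₁, h₂, h₃⟩ | ⟨h₁, h₂, h₃⟩⟩ := h
  · exact ⟨e, he, .inr ⟨h₂, h₁, by rw [h₃, add_sub_cancel_right]⟩⟩
  · exact ⟨e, he, .inl ⟨h₂, h₁, by rw [h₃, sub_add_cancel]⟩⟩

instance : Std.Symm (G.liftStep S) :=
  ⟨fun _ _ => liftStep_symm⟩

theorem liftStep_add {u w : Fin G.n} {s t : Γ} (d : Γ) (h : G.liftStep S (u, s) (w, t)) :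
    G.liftStep S (u, s + d) (w, t + d) := by
  obtain ⟨e, he, ⟨h₁, h₂, h₃⟩ | ⟨h₁, h₂, h₃⟩⟩ := h
  · exact ⟨e, he, .inl ⟨h₁, h₂, by simp only at h₃ ⊢; rw [h₃, add_right_comm]⟩⟩
  · exact ⟨e, he, .inr ⟨h₁, h₂, by simp only at h₃ ⊢; rw [h₃, sub_add_eq_add_sub]⟩⟩

theorem reflTransGen_liftStep_add {u w : Fin G.n} {s t : Γ} (d : Γ)
    (h : Relation.ReflTransGen (G.liftStep S) (u, s) (w, t)) :
    Relation.ReflTransGen (G.liftStep S) (u, s + d) (w, t + d) :=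
  Relation.ReflTransGen.lift (fun x : Fin G.n × Γ => (x.1, x.2 + d))
    (fun _ _ => liftStep_add d) _ _ h

theorem exists_reflTransGen_of_eqvGen {a b : {v // v ∈ G.verts S}}
    (h : Relation.EqvGen (G.adj S) a b) :
    ∃ g, Relation.ReflTransGen (G.liftStep S) (a.1, 0) (b.1, g) := by
  let R : {v // v ∈ G.verts S} → {v // v ∈ G.verts S} → Prop :=
    fun a b => ∃ g, Relation.ReflTransGen (G.liftStep S) (a.1, (0 : Γ)) (b.1, g)
  have hR : Equivalence R := by
    refine ⟨fun _ => ⟨0, .refl⟩, fun ⟨g, h⟩ => ⟨-g, ?_⟩, fun ⟨g, h⟩ ⟨g', h'⟩ => ⟨g' + g, ?_⟩⟩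
    · simpa using reflTransGen_liftStep_add (-g) (symm_of _ h)
    · exact h.trans (by simpa using reflTransGen_liftStep_add g h')
  refine hR.eqvGen_iff.1 (h.mono fun a b ⟨e, he, hab⟩ => ?_)
  rcases hab with ⟨h₁, h₂⟩ | ⟨h₁, h₂⟩
  · exact ⟨_, .single ⟨e, he, .inl ⟨h₁, h₂, rfl⟩⟩⟩
  · exact ⟨_, .single ⟨e, he, .inr ⟨h₂, h₁, rfl⟩⟩⟩

theorem eq_of_gainGroup_eq_bot {v w : Fin G.n} {g g' : Γ} (hv : G.gainGroup S v = ⊥)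
    (h : Relation.ReflTransGen (G.liftStep S) (v, 0) (w, g))
    (h' : Relation.ReflTransGen (G.liftStep S) (v, 0) (w, g')) : g = g' := by
  have hback : Relation.ReflTransGen (G.liftStep S) (w, g) (v, g - g') := by
    simpa using reflTransGen_liftStep_add (g - g') (symm_of _ h')
  have : g - g' ∈ G.gainGroup S v := AddSubgroup.subset_closure (h.trans hback)
  rwa [hv, AddSubgroup.mem_bot, sub_eq_zero] at this

variable (S) in
def IsPotential (φ : Fin G.n → Γ) : Prop :=
  ∀ e ∈ S, φ (G.head e) = φ (G.tail e) + G.color e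

theorem IsPotential.sub_eq_of_reflTransGen {φ : Fin G.n → Γ} (hφ : G.IsPotential S φ)
    {x y : Fin G.n × Γ} (h : Relation.ReflTransGen (G.liftStep S) x y) :
    y.2 - φ y.1 = x.2 - φ x.1 := by
  induction h with
  | refl => rfl
  | tail _ hstep ih =>
    obtain ⟨e, he, ⟨h₁, h₂, h₃⟩ | ⟨h₁, h₂, h₃⟩⟩ := hstep
    · rw [← ih, h₃, ← h₂, hφ e he, h₁]
      abel
    · rw [← ih, h₃, ← h₁, hφ e he, h₂]
      abel

theorem IsPotential.gainGroup_eq_bot {φ : Fin G.n → Γ} (hφ : G.IsPotential S φ) (v : Fin G.n) :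
    G.gainGroup S v = ⊥ :=
  AddSubgroup.closure_eq_bot_iff.2 fun g hg => by simpa using hφ.sub_eq_of_reflTransGen hg

end GainGraph

section Components

open scoped Classical

variable {Γ : Type} (G : CGraph Γ) (S : Finset (Fin G.m)) [Nonempty (G.comps S)]

/-- Vertices outside `S` are sent to an arbitrary component. -/
def compOf (w : Fin G.n) : G.comps S :=
  if h : w ∈ G.verts S then Quot.mk _ ⟨w, h⟩ else Classical.arbitrary _

def compEdges (x : G.comps S) : Finset (Fin G.m) :=
  {e ∈ S | G.compOf S (G.tail e) = x}

variable {G S}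

theorem compOf_of_mem {w : Fin G.n} (hw : w ∈ G.verts S) : G.compOf S w = Quot.mk _ ⟨w, hw⟩ :=
  dif_pos hw

theorem compOf_head {e : Fin G.m} (he : e ∈ S) :
    G.compOf S (G.head e) = G.compOf S (G.tail e) := by
  rw [compOf_of_mem (head_mem_verts he), compOf_of_mem (tail_mem_verts he)]
  exact Quot.sound ⟨e, he, .inr ⟨rfl, rfl⟩⟩

theorem verts_compEdges (x : G.comps S) :
    G.verts (G.compEdges S x) = {w ∈ G.verts S | G.compOf S w = x} := by
  ext w
  simp only [Finset.mem_filter, mem_verts, compEdges]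
  constructor
  · rintro ⟨e, ⟨he, rfl⟩, rfl | rfl⟩
    exacts [⟨⟨e, he, .inl rfl⟩, rfl⟩, ⟨⟨e, he, .inr rfl⟩, compOf_head he⟩]
  · rintro ⟨⟨e, he, h | h⟩, rfl⟩
    · exact ⟨e, ⟨he, by rw [h]⟩, .inl h⟩
    · exact ⟨e, ⟨he, by rw [← h, compOf_head he]⟩, .inr h⟩

theorem compEdges_nonempty (x : G.comps S) : (G.compEdges S x).Nonempty := by
  obtain ⟨v, rfl⟩ := Quot.exists_rep x
  obtain ⟨e, he, h | h⟩ := mem_verts.1 v.2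
  · refine ⟨e, Finset.mem_filter.2 ⟨he, ?_⟩⟩
    rw [compOf_of_mem (h ▸ tail_mem_verts he)]
    congr
  · refine ⟨e, Finset.mem_filter.2 ⟨he, ?_⟩⟩
    rw [← compOf_head he, compOf_of_mem (h ▸ head_mem_verts he)]
    congr

theorem card_eq_sum_card_compEdges [Fintype (G.comps S)] :
    S.card = ∑ x, (G.compEdges S x).card :=
  Finset.card_eq_sum_card_fiberwise fun _ _ => Finset.mem_univ _

theorem card_verts_eq_sum_card_verts_compEdges [Fintype (G.comps S)] :
    (G.verts S).card = ∑ x, (G.verts (G.compEdges S x)).card := by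
  simp only [verts_compEdges]
  exact Finset.card_eq_sum_card_fiberwise fun _ _ => Finset.mem_univ _

theorem exists_isPotential_compEdges [AddCommGroup Γ] {x : G.comps S} (hx : G.TrivComp S x) :
    ∃ φ, G.IsPotential (G.compEdges S x) φ := by
  obtain ⟨v, rfl, hv⟩ := hx
  have reach : ∀ w (hw : w ∈ G.verts S), G.compOf S w = Quot.mk _ v →
      ∃ g, Relation.ReflTransGen (G.liftStep S) (v.1, 0) (w, g) := by
    intro w hw hwv
    rw [compOf_of_mem hw] at hwv
    exact exists_reflTransGen_of_eqvGen (Quot.eqvGen_exact hwv.symm)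
  choose! φ hφ using reach
  refine ⟨φ, fun e he => ?_⟩
  obtain ⟨heS, hev⟩ := Finset.mem_filter.1 he
  have htail := hφ _ (tail_mem_verts heS) hev
  have hhead := hφ _ (head_mem_verts heS) ((compOf_head heS).trans hev)
  exact eq_of_gainGroup_eq_bot hv hhead (htail.tail ⟨e, heS, .inl ⟨rfl, rfl, rfl⟩⟩)

end Components

section LiftedComponents

open scoped Classical

variable {k : ℕ} {G : CGraph (ZMod k)} {T : Finset (Fin G.m)}

theorem LiftLamanSparse.card_add_three_le_of_isPotential (hsp : G.LiftLamanSparse) (hT : T.Nonempty)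
    {φ : Fin G.n → ZMod k} (hφ : G.IsPotential T φ) :
    T.card + 3 ≤ 2 * (G.verts T).card := by
  let C := T.image fun e => (e, φ (G.tail e))
  have hC : C.card = T.card :=
    Finset.card_image_of_injective _ fun a b h => (Prod.ext_iff.1 h).1
  have hV : G.liftVerts C ⊆ (G.verts T).image fun w => (w, φ w) := by
    intro p hp
    simp only [liftVerts, C, Finset.mem_union, Finset.mem_image] at hp
    rcases hp with ⟨_, ⟨e, he, rfl⟩, rfl⟩ | ⟨_, ⟨e, he, rfl⟩, rfl⟩
    · exact Finset.mem_image_of_mem _ (tail_mem_verts he)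
    · rw [← hφ e he]
      exact Finset.mem_image_of_mem _ (head_mem_verts he)
  have hVcard := (Finset.card_le_card hV).trans Finset.card_image_le
  have := hsp C (hT.image _)
  omega

theorem LiftLamanSparse.card_add_one_le [NeZero k] (hsp : G.LiftLamanSparse) (hT : T.Nonempty) :
    T.card + 1 ≤ 2 * (G.verts T).card := by
  let C := T ×ˢ (Finset.univ : Finset (ZMod k))
  have hV : G.liftVerts C ⊆ G.verts T ×ˢ Finset.univ := by
    intro p hp
    simp only [liftVerts, C, Finset.mem_union, Finset.mem_image, Finset.mem_product] at hp ⊢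
    rcases hp with ⟨q, ⟨hq, -⟩, rfl⟩ | ⟨q, ⟨hq, -⟩, rfl⟩
    exacts [⟨tail_mem_verts hq, Finset.mem_univ _⟩, ⟨head_mem_verts hq, Finset.mem_univ _⟩]
  have hVcard : (G.liftVerts C).card ≤ (G.verts T).card * k := by
    simpa [ZMod.card] using Finset.card_le_card hV
  have hsp' : ((T.card * k : ℕ) : ℤ) ≤ 2 * (G.liftVerts C).card - 3 := by
    simpa [C, ZMod.card] using hsp C (hT.product Finset.univ_nonempty)
  have : T.card * k < 2 * (G.verts T).card * k := by
    zify at hsp' hVcard ⊢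
    linarith
  have := Nat.lt_of_mul_lt_mul_right this
  omega

theorem LiftLamanSparse.coneLamanSparse [NeZero k] (hsp : G.LiftLamanSparse) :
    G.ConeLamanSparse := by
  intro S hS
  have := nonempty_comps hS
  have := Fintype.ofFinite (G.comps S)
  have hcomp (x : G.comps S) : (G.compEdges S x).card + (if G.TrivComp S x then 3 else 1) ≤
      2 * (G.verts (G.compEdges S x)).card := by
    split_ifs with hx
    · obtain ⟨φ, hφ⟩ := exists_isPotential_compEdges hx
      exact hsp.card_add_three_le_of_isPotential (compEdges_nonempty x) hφ
    · exact hsp.card_add_one_le (compEdges_nonempty x)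
  have : S.card + G.penalty S ≤ 2 * (G.verts S).card := by
    rw [card_eq_sum_card_compEdges, ← sum_ite_trivComp, card_verts_eq_sum_card_verts_compEdges,
      ← Finset.sum_add_distrib, Finset.mul_sum]
    exact Finset.sum_le_sum fun x _ => hcomp x
  rw [penalty] at this
  omega

end LiftedComponents

section Levels

open Finset

variable {k : ℕ} [NeZero k] (G : CGraph (ZMod k)) (C : Finset (Fin G.m × ZMod k))

def edgeFiber (e : Fin G.m) : Finset (ZMod k) :=
  {t | (e, t) ∈ C}

def vertFiber (w : Fin G.n) : Finset (ZMod k) :=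
  {t | (w, t) ∈ G.liftVerts C}

def level (j : ℕ) : Finset (Fin G.m) :=
  {e | j ≤ (G.edgeFiber C e).card}

variable {G C}

theorem card_edgeFiber_le (e : Fin G.m) : (G.edgeFiber C e).card ≤ k := by
  simpa using card_le_univ (G.edgeFiber C e)

theorem edgeFiber_subset_vertFiber_tail (e : Fin G.m) :
    G.edgeFiber C e ⊆ G.vertFiber C (G.tail e) := by
  intro t ht
  simp only [edgeFiber, vertFiber, liftVerts, mem_filter, mem_univ, true_and, mem_union,
    mem_image] at ht ⊢
  exact .inl ⟨_, ht, rfl⟩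

theorem image_edgeFiber_subset_vertFiber_head (e : Fin G.m) :
    (G.edgeFiber C e).image (· + G.color e) ⊆ G.vertFiber C (G.head e) := by
  intro t ht
  simp only [edgeFiber, vertFiber, liftVerts, mem_filter, mem_univ, true_and, mem_union,
    mem_image] at ht ⊢
  obtain ⟨s, hs, rfl⟩ := ht
  exact .inr ⟨_, hs, rfl⟩

theorem card_edgeFiber_le_card_vertFiber_tail (e : Fin G.m) :
    (G.edgeFiber C e).card ≤ (G.vertFiber C (G.tail e)).card :=
  card_le_card (edgeFiber_subset_vertFiber_tail e)

theorem card_edgeFiber_le_card_vertFiber_head (e : Fin G.m) :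
    (G.edgeFiber C e).card ≤ (G.vertFiber C (G.head e)).card := by
  rw [← card_image_of_injective _ (add_left_injective (G.color e))]
  exact card_le_card (image_edgeFiber_subset_vertFiber_head e)

theorem sum_vertFiber_head {e : Fin G.m}
    (htail : (G.vertFiber C (G.tail e)).card ≤ (G.edgeFiber C e).card)
    (hhead : (G.vertFiber C (G.head e)).card ≤ (G.edgeFiber C e).card) :
    ∑ t ∈ G.vertFiber C (G.head e), t =
      ∑ t ∈ G.vertFiber C (G.tail e), t + (G.edgeFiber C e).card • G.color e := by
  have hinj := add_left_injective (G.color e)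
  rw [← eq_of_subset_of_card_le (edgeFiber_subset_vertFiber_tail e) htail,
    ← eq_of_subset_of_card_le (image_edgeFiber_subset_vertFiber_head e)
      (by rwa [card_image_of_injective _ hinj]),
    sum_image fun _ _ _ _ h => hinj h, sum_add_distrib, sum_const]

theorem card_eq_sum_card_level : C.card = ∑ j ∈ Icc 1 k, (G.level C j).card := by
  rw [C.card_eq_sum_card_slice]
  exact sum_eq_sum_Icc_card_filter_le card_edgeFiber_le

theorem level_anti : Antitone (G.level C) := by
  intro i j hij e he
  simp only [level, mem_filter, mem_univ, true_and] at he ⊢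
  omega

theorem le_card_vertFiber {j : ℕ} {w : Fin G.n} (hw : w ∈ G.verts (G.level C j)) :
    j ≤ (G.vertFiber C w).card := by
  obtain ⟨e, he, rfl | rfl⟩ := mem_verts.1 hw
  · exact (mem_filter.1 he).2.trans (card_edgeFiber_le_card_vertFiber_tail e)
  · exact (mem_filter.1 he).2.trans (card_edgeFiber_le_card_vertFiber_head e)

theorem exists_top_level (hC : C.Nonempty) :
    ∃ d, 1 ≤ d ∧ d ≤ k ∧ (G.level C d).Nonempty ∧ G.level C (d + 1) = ∅ := by
  obtain ⟨⟨e₀, t₀⟩, h₀⟩ := hC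
  obtain ⟨e, -, he⟩ := exists_mem_eq_sup univ ⟨e₀, mem_univ _⟩ fun e => (G.edgeFiber C e).card
  have hsup (e' : Fin G.m) : (G.edgeFiber C e').card ≤ (G.edgeFiber C e).card :=
    he ▸ le_sup (f := fun e => (G.edgeFiber C e).card) (mem_univ e')
  refine ⟨(G.edgeFiber C e).card, ?_, card_edgeFiber_le e, ⟨e, by simp [level]⟩, ?_⟩
  · exact (card_pos.2 ⟨t₀, by simpa [edgeFiber] using h₀⟩).trans_le (hsup e₀)
  · ext e'
    simpa [level] using hsup e'

theorem card_levels_at_le (w : Fin G.n) :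
    (Icc 1 k |>.filter fun j => w ∈ G.verts (G.level C j)).card ≤ (G.vertFiber C w).card := by
  calc _ ≤ (Icc 1 (G.vertFiber C w).card).card := by
        refine card_le_card fun j hj => ?_
        simp only [mem_filter, mem_Icc] at hj ⊢
        exact ⟨hj.1.1, le_card_vertFiber hj.2⟩
    _ = _ := by simp

theorem card_levels_at_eq_of_top {d : ℕ} {w : Fin G.n} (hdk : d ≤ k)
    (htop : G.level C (d + 1) = ∅) (hw : w ∈ G.verts (G.level C d)) :
    (Icc 1 k |>.filter fun j => w ∈ G.verts (G.level C j)).card = d := by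
  have : (Icc 1 k |>.filter fun j => w ∈ G.verts (G.level C j)) = Icc 1 d := by
    ext j
    simp only [mem_filter, mem_Icc]
    constructor
    · rintro ⟨⟨hj1, -⟩, hj⟩
      refine ⟨hj1, not_lt.1 fun hdj => ?_⟩
      have := verts_mono (level_anti hdj) hj
      simp [htop, verts] at this
    · rintro ⟨hj1, hjd⟩
      exact ⟨⟨hj1, hjd.trans hdk⟩, verts_mono (level_anti hjd) hw⟩
  simp [this]

theorem sum_card_verts_level_le :
    ∑ j ∈ Icc 1 k, (G.verts (G.level C j)).card ≤ (G.liftVerts C).card := by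
  rw [sum_card_eq_sum_card_filter_mem, (G.liftVerts C).card_eq_sum_card_slice]
  exact sum_le_sum fun w _ => card_levels_at_le w

theorem sum_card_verts_level_lt {d : ℕ} {w : Fin G.n} (hdk : d ≤ k)
    (htop : G.level C (d + 1) = ∅) (hw : w ∈ G.verts (G.level C d))
    (hne : (G.vertFiber C w).card ≠ d) :
    ∑ j ∈ Icc 1 k, (G.verts (G.level C j)).card < (G.liftVerts C).card := by
  rw [sum_card_eq_sum_card_filter_mem, (G.liftVerts C).card_eq_sum_card_slice]
  refine sum_lt_sum (fun w _ => card_levels_at_le w) ⟨w, mem_univ _, ?_⟩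
  rw [card_levels_at_eq_of_top hdk htop hw]
  exact (le_card_vertFiber hw).lt_of_ne' hne

theorem le_sum_penalty_level {d : ℕ} (hdk : d ≤ k) (hd : (G.level C d).Nonempty) :
    d ≤ ∑ j ∈ Icc 1 k, G.penalty (G.level C j) :=
  calc d = ∑ j ∈ Icc 1 d, 1 := by simp
    _ ≤ ∑ j ∈ Icc 1 d, G.penalty (G.level C j) :=
      sum_le_sum fun j hj => one_le_penalty (hd.mono (level_anti (mem_Icc.1 hj).2))
    _ ≤ _ := sum_le_sum_of_subset (Icc_subset_Icc le_rfl hdk)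

theorem isPotential_level [Fact k.Prime] {d : ℕ} (hd : (d : ZMod k) ≠ 0)
    (hfiber : ∀ w ∈ G.verts (G.level C d), (G.vertFiber C w).card = d) :
    G.IsPotential (G.level C d) fun w => (d : ZMod k)⁻¹ * ∑ t ∈ G.vertFiber C w, t := by
  intro e he
  have hde : d ≤ (G.edgeFiber C e).card := (mem_filter.1 he).2
  have htail := hfiber _ (tail_mem_verts he)
  have hhead := hfiber _ (head_mem_verts he)
  have hcard : (G.edgeFiber C e).card = d :=
    le_antisymm (htail ▸ card_edgeFiber_le_card_vertFiber_tail e) hde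
  dsimp only
  rw [sum_vertFiber_head (by omega) (by omega), hcard, nsmul_eq_mul, mul_add,
    inv_mul_cancel_left₀ hd]

theorem sum_card_verts_level_add_three_le [Fact k.Prime] (hk : 3 ≤ k) (hC : C.Nonempty) :
    2 * ∑ j ∈ Icc 1 k, (G.verts (G.level C j)).card + 3 ≤
      2 * (G.liftVerts C).card + ∑ j ∈ Icc 1 k, G.penalty (G.level C j) := by
  obtain ⟨d, hd1, hdk, hdne, htop⟩ := exists_top_level hC
  have hle := sum_card_verts_level_le (C := C)
  have hpen := le_sum_penalty_level hdk hdne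
  rcases le_or_gt 3 d with h3 | h3
  · omega
  by_cases hfiber : ∀ w ∈ G.verts (G.level C d), (G.vertFiber C w).card = d
  · have hd : (d : ZMod k) ≠ 0 :=
      (ZMod.natCast_eq_zero_iff d k).not.2 (Nat.not_dvd_of_pos_of_lt hd1 (by omega))
    have := three_le_penalty hdne (isPotential_level hd hfiber).gainGroup_eq_bot
    have := single_le_sum (f := fun j => G.penalty (G.level C j)) (fun j _ => Nat.zero_le _)
      (mem_Icc.2 ⟨hd1, hdk⟩)
    omega
  · push Not at hfiber
    obtain ⟨w, hw, hne⟩ := hfiber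
    have := sum_card_verts_level_lt hdk htop hw hne
    omega

theorem ConeLamanSparse.liftLamanSparse (hp : k.Prime) (hk : 3 ≤ k) (h : G.ConeLamanSparse) :
    G.LiftLamanSparse := by
  have : Fact k.Prime := ⟨hp⟩
  intro C hC
  have hlevels : C.card + ∑ j ∈ Icc 1 k, G.penalty (G.level C j) ≤
      2 * ∑ j ∈ Icc 1 k, (G.verts (G.level C j)).card := by
    rw [card_eq_sum_card_level, ← sum_add_distrib, mul_sum]
    exact sum_le_sum fun j _ => h.card_add_penalty_le _
  have := sum_card_verts_level_add_three_le hk hC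
  omega

end Levels

end CGraph

/-- For `k ≥ 3` prime, a `ℤ/kℤ`-colored graph is cone-Laman iff its
lift `G̃` (which has `ñ = kn` vertices and `km` edges, so `2ñ - k` edges means
`m = 2n - 1`) is Laman-sparse and `m = 2n - 1`. -/
theorem coneLaman_iff_lift_lamanSparse (k : ℕ) (hp : Nat.Prime k) (hk : 3 ≤ k)
    (G : CGraph (ZMod k)) :
    G.ConeLaman ↔ ((G.m : ℤ) = 2 * (G.n : ℤ) - 1 ∧ G.LiftLamanSparse) := by
  have : NeZero k := ⟨hp.ne_zero⟩
  exact and_congr_right fun _ =>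
    ⟨CGraph.ConeLamanSparse.liftLamanSparse hp hk, CGraph.LiftLamanSparse.coneLamanSparse⟩
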